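/- arXiv:1903.02385 — 2 statements merged into one kernel-verified Lean document; each statement's English description precedes it below -/
import Mathlib

section
/- Let v : ℝ → ℝ be a C⁴ positive solution of the ODE v''''(t) − A·v''(t) + B·v(t) = g(v(t)). Then v'(t) < ((n−4)/2)·v(t) for all t ∈ ℝ. Equivalently, the corresponding radial function u(x) = |x|^{−(n−4)/2}·v(ln|x|) satisfies ∂u/∂|x| < 0 on ℝⁿ \ {0}. -/
/-!
With `a = (n - 4) / 2 < b = n / 2` the characteristic polynomial of the linear part factors as
`(ξ - a) (ξ - b) (ξ + b) (ξ + a)`, so the equation becomes the first-order cascade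
`w = v' - a v`, `q = w' - b w`, `z = q' + b q`, `z' + a z = g(v)`; the claim is `w < 0`.

The superlinear growth of `g` rules out `w > 0`, `q ≥ 0` near `+∞`: then `v → ∞` and
`v'''' ≥ c v ^ p / 2`, and three energy identities give `v' ≥ c' v ^ r` with `r > 1`, which blows
up in finite time. Integrating the cascade with exponential weights, `z ≤ 0` at some point forces,
near `-∞`, either `v < 0` or `v ≥ ε e^(-b t)`. Since the equation is invariant under `t ↦ -t`, the
latter is growth `v ≥ ε e^(b t)` at `+∞`, which the cascade turns into `w, q > 0` there. Hence
`z > 0`, in the same way `q > 0`, and then `w ≥ 0` at one point would persist at all later times.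
-/

open Real Filter Set

noncomputable section

/-- Conditions (G) on the nonlinearity `g`, extended to `[0,∞)` by `g 0 = 0`. -/
def CondG (n : ℕ) (g : ℝ → ℝ) : Prop :=
  ContDiffOn ℝ 1 g (Set.Ioi 0) ∧
  (∀ t > 0, 0 < g t) ∧
  Filter.Tendsto g (nhdsWithin 0 (Set.Ioi 0)) (nhds 0) ∧
  (∀ t > 0, g t / t < deriv g t ∧ deriv g t ≤ (((n : ℝ) + 4) / ((n : ℝ) - 4)) * (g t / t)) ∧
  (∃ β : ℝ, 0 ≤ β ∧ β < (n : ℝ) ^ 2 * ((n : ℝ) - 4) ^ 2 / 16 ∧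
    Filter.Tendsto (deriv g) (nhdsWithin 0 (Set.Ioi 0)) (nhds β)) ∧
  (∃ q c : ℝ, 1 < q ∧ 0 < c ∧ ∀ t ≥ 1, c * t ^ q ≤ g t) ∧
  g 0 = 0

/-- `v` solves the ODE `v'''' - A v'' + B v = g(v)` on all of `ℝ`. -/
def IsSol (A B : ℝ) (g v : ℝ → ℝ) : Prop :=
  ∀ t : ℝ, iteratedDeriv 4 v t - A * iteratedDeriv 2 v t + B * v t = g (v t)

lemma monotoneOn_of_forall_hasDerivAt {D : Set ℝ} (hD : Convex ℝ D) {f f' : ℝ → ℝ}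
    (hf : ∀ t, HasDerivAt f (f' t) t) (hf' : ∀ t ∈ interior D, 0 ≤ f' t) : MonotoneOn f D :=
  monotoneOn_of_hasDerivWithinAt_nonneg hD (fun t _ => (hf t).continuousAt.continuousWithinAt)
    (fun t _ => (hf t).hasDerivWithinAt) hf'

lemma antitoneOn_of_forall_hasDerivAt {D : Set ℝ} (hD : Convex ℝ D) {f f' : ℝ → ℝ}
    (hf : ∀ t, HasDerivAt f (f' t) t) (hf' : ∀ t ∈ interior D, f' t ≤ 0) : AntitoneOn f D :=
  antitoneOn_of_hasDerivWithinAt_nonpos hD (fun t _ => (hf t).continuousAt.continuousWithinAt)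
    (fun t _ => (hf t).hasDerivWithinAt) hf'

lemma exists_forall_ge_le_of_deriv_nonneg {f f' : ℝ → ℝ} (hf : ∀ t, HasDerivAt f (f' t) t)
    (hf' : ∀ᶠ t in atTop, 0 ≤ f' t) : ∃ S, ∀ t ≥ S, f S ≤ f t := by
  obtain ⟨S, hS⟩ := eventually_atTop.1 hf'
  have hmono := monotoneOn_of_forall_hasDerivAt (convex_Ici S) hf
    (by simpa using fun t ht => hS t ht.le)
  exact ⟨S, fun t ht => hmono self_mem_Ici ht ht⟩

lemma ContDiff.hasDerivAt_iteratedDeriv {f : ℝ → ℝ} {n : WithTop ℕ∞} (hf : ContDiff ℝ n f)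
    {k : ℕ} (hk : k < n) (t : ℝ) :
    HasDerivAt (iteratedDeriv k f) (iteratedDeriv (k + 1) f t) t := by
  rw [iteratedDeriv_succ]
  exact (hf.differentiable_iteratedDeriv k hk t).hasDerivAt

lemma hasDerivAt_comp_neg {f : ℝ → ℝ} {f' x : ℝ} (hf : HasDerivAt f f' (-x)) :
    HasDerivAt (fun s => f (-s)) (-f') x := by
  have := hf.comp x (hasDerivAt_neg x)
  rw [mul_neg_one] at this
  exact this

lemma eventually_mul_exp_le {l : Filter ℝ} {k r ε : ℝ} (D : ℝ) (hε : 0 < ε)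
    (hl : Tendsto (fun t => (k - r) * t) l atBot) :
    ∀ᶠ t in l, D * exp (k * t) ≤ ε * exp (r * t) := by
  have h0 : Tendsto (fun t => D * exp ((k - r) * t)) l (nhds 0) := by
    simpa using (tendsto_exp_atBot.comp hl).const_mul D
  filter_upwards [h0.eventually (eventually_le_nhds hε)] with t ht
  calc D * exp (k * t) = D * exp ((k - r) * t) * exp (r * t) := by
        rw [mul_assoc, ← exp_add, sub_mul, sub_add_cancel]
    _ ≤ ε * exp (r * t) := mul_le_mul_of_nonneg_right ht (exp_pos _).le

section LinearFirstOrder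

variable {f h : ℝ → ℝ} {k r C : ℝ}

lemma hasDerivAt_exp_neg_mul_mul {t h' : ℝ} (hf : HasDerivAt f (k * f t + h') t) :
    HasDerivAt (fun t => exp (-k * t) * f t) (exp (-k * t) * h') t := by
  have he : HasDerivAt (fun t => exp (-k * t)) (exp (-k * t) * -k) t := by
    simpa using ((hasDerivAt_id t).const_mul (-k)).exp
  exact (he.mul hf).congr_deriv (by ring)

lemma le_exp_neg_mul_mul_iff {t m x : ℝ} : m ≤ exp (-k * t) * x ↔ m * exp (k * t) ≤ x := by
  rw [neg_mul, exp_neg, inv_mul_eq_div, le_div_iff₀ (exp_pos _)]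

lemma exp_neg_mul_mul_le_iff {t m x : ℝ} : exp (-k * t) * x ≤ m ↔ x ≤ m * exp (k * t) := by
  rw [neg_mul, exp_neg, inv_mul_eq_div, div_le_iff₀ (exp_pos _)]

-- `C / (r - k) * exp (r * t)` is a particular solution of `P' = k P + C exp (r t)`.
lemma hasDerivAt_sub_particular (hf : ∀ t, HasDerivAt f (k * f t + h t) t) (hkr : k ≠ r)
    (t : ℝ) : HasDerivAt (fun t => f t - C / (r - k) * exp (r * t))
      (k * (f t - C / (r - k) * exp (r * t)) + (h t - C * exp (r * t))) t := by
  have hP : HasDerivAt (fun t => C / (r - k) * exp (r * t))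
      (C / (r - k) * (exp (r * t) * r)) t := by
    simpa using ((hasDerivAt_id t).const_mul r).exp.const_mul (C / (r - k))
  exact ((hf t).sub hP).congr_deriv (by field_simp [sub_ne_zero.2 hkr.symm]; ring)

theorem exists_exp_le_atTop_of_linear (hf : ∀ t, HasDerivAt f (k * f t + h t) t) (hkr : k < r)
    (hC : 0 < C) (hh : ∀ᶠ t in atTop, C * exp (r * t) ≤ h t) :
    ∃ C' > 0, ∀ᶠ t in atTop, C' * exp (r * t) ≤ f t := by
  have hrk : 0 < r - k := sub_pos.2 hkr
  obtain ⟨S, hS⟩ := exists_forall_ge_le_of_deriv_nonneg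
    (fun t => hasDerivAt_exp_neg_mul_mul (hasDerivAt_sub_particular (C := C) hf hkr.ne t))
    (hh.mono fun t ht => mul_nonneg (exp_pos _).le (sub_nonneg.2 ht))
  refine ⟨C / (2 * (r - k)), by positivity, ?_⟩
  filter_upwards [eventually_ge_atTop S, eventually_mul_exp_le
    (-(exp (-k * S) * (f S - C / (r - k) * exp (r * S)))) (by positivity : 0 < C / (2 * (r - k)))
    (tendsto_id.const_mul_atTop_of_neg (sub_neg.2 hkr))] with t ht hD
  have hmain := le_exp_neg_mul_mul_iff.1 (hS t ht)
  have hsplit : C / (r - k) * exp (r * t) = 2 * (C / (2 * (r - k)) * exp (r * t)) := by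
    field_simp
  linarith

theorem exists_exp_le_atBot_of_linear (hf : ∀ t, HasDerivAt f (k * f t + h t) t) (hrk : r < k)
    (hC : 0 < C) (hh : ∀ᶠ t in atBot, h t ≤ -(C * exp (r * t))) :
    ∃ C' > 0, ∀ᶠ t in atBot, C' * exp (r * t) ≤ f t := by
  have hrev : ∀ s, HasDerivAt (fun s => f (-s)) (-k * f (-s) + -h (-s)) s := fun s =>
    (hasDerivAt_comp_neg (hf (-s))).congr_deriv (by ring)
  obtain ⟨C', hC', hev⟩ := exists_exp_le_atTop_of_linear hrev (neg_lt_neg hrk) hC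
    ((tendsto_neg_atTop_atBot.eventually hh).mono fun s hs => by
      simp only [mul_neg, neg_mul] at hs ⊢; linarith)
  exact ⟨C', hC', (tendsto_neg_atBot_atTop.eventually hev).mono fun t ht => by simpa using ht⟩

theorem exists_le_neg_exp_atBot_of_linear (hf : ∀ t, HasDerivAt f (k * f t + h t) t)
    (hrk : r < k) (hC : 0 < C) (hh : ∀ᶠ t in atBot, C * exp (r * t) ≤ h t) :
    ∃ C' > 0, ∀ᶠ t in atBot, f t ≤ -(C' * exp (r * t)) := by
  obtain ⟨C', hC', hev⟩ := exists_exp_le_atBot_of_linear (f := -f) (h := -h)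
    (fun t => (hf t).neg.congr_deriv (by simp only [Pi.neg_apply]; ring)) hrk hC
    (hh.mono fun t ht => by simp only [Pi.neg_apply]; linarith)
  exact ⟨C', hC', hev.mono fun t ht => by simp only [Pi.neg_apply] at ht; linarith⟩

theorem pos_of_linear_of_nonneg (hf : ∀ t, HasDerivAt f (k * f t + h t) t) (hh : ∀ t, 0 < h t)
    {t₀ t : ℝ} (h₀ : 0 ≤ f t₀) (ht : t₀ < t) : 0 < f t := by
  have hmono := strictMono_of_hasDerivAt_pos (fun t => hasDerivAt_exp_neg_mul_mul (hf t))
    fun t => mul_pos (exp_pos _) (hh t)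
  have := (mul_nonneg (exp_pos _).le h₀).trans_lt (hmono ht)
  exact pos_of_mul_pos_right this (exp_pos _).le

theorem exists_le_neg_exp_atBot_of_linear_of_nonpos (hf : ∀ t, HasDerivAt f (k * f t + h t) t)
    (hh : ∀ t, 0 < h t) {t₀ : ℝ} (h₀ : f t₀ ≤ 0) :
    ∃ ε > 0, ∀ᶠ t in atBot, f t ≤ -(ε * exp (k * t)) := by
  have hmono := strictMono_of_hasDerivAt_pos (fun t => hasDerivAt_exp_neg_mul_mul (hf t))
    fun t => mul_pos (exp_pos _) (hh t)
  have hlt : exp (-k * (t₀ - 1)) * f (t₀ - 1) < 0 :=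
    (hmono (by linarith)).trans_le (mul_nonpos_of_nonneg_of_nonpos (exp_pos _).le h₀)
  refine ⟨-(exp (-k * (t₀ - 1)) * f (t₀ - 1)), neg_pos.2 hlt,
    eventually_atBot.2 ⟨t₀ - 1, fun t ht => ?_⟩⟩
  rw [← neg_mul, neg_neg]
  exact exp_neg_mul_mul_le_iff.1 (hmono.monotone ht)

theorem tendsto_atTop_of_linear (hf : ∀ t, HasDerivAt f (k * f t + h t) t) (hk : 0 < k)
    (hh : ∀ᶠ t in atTop, 0 ≤ h t) (hpos : ∀ t, 0 < f t) : Tendsto f atTop atTop := by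
  obtain ⟨S, hS⟩ := exists_forall_ge_le_of_deriv_nonneg (fun t => hasDerivAt_exp_neg_mul_mul (hf t))
    (hh.mono fun t ht => mul_nonneg (exp_pos _).le ht)
  exact tendsto_atTop_mono' atTop
    ((eventually_ge_atTop S).mono fun t ht => le_exp_neg_mul_mul_iff.1 (hS t ht))
    ((tendsto_exp_atTop.comp (tendsto_id.const_mul_atTop hk)).const_mul_atTop
      (mul_pos (exp_pos _) (hpos S)))

theorem exp_le_or_le_neg_exp_atBot_of_linear (hf : ∀ t, HasDerivAt f (k * f t + h t) t)
    (hkr : k < r) (hh : ∀ᶠ t in atBot, h t ≤ -(C * exp (r * t))) :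
    (∃ m > 0, ∀ᶠ t in atBot, m * exp (k * t) ≤ f t) ∨
      ∀ᶠ t in atBot, f t ≤ -(C / (r - k) * exp (r * t)) := by
  obtain ⟨s, hs⟩ := eventually_atBot.1 hh
  have hanti := antitoneOn_of_forall_hasDerivAt (convex_Iic s)
    (fun t => hasDerivAt_exp_neg_mul_mul (hasDerivAt_sub_particular (C := -C) hf hkr.ne t))
    (by
      simp only [interior_Iic, mem_Iio]
      intro t ht
      exact mul_nonpos_of_nonneg_of_nonpos (exp_pos _).le (by linarith [hs t ht.le]))
  -- By antitonicity, positivity at one point persists to the left; otherwise `f ≤ -P`.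
  by_cases hpos : ∃ t₁ ≤ s, 0 < exp (-k * t₁) * (f t₁ - -C / (r - k) * exp (r * t₁))
  · obtain ⟨t₁, ht₁, hm⟩ := hpos
    set m := exp (-k * t₁) * (f t₁ - -C / (r - k) * exp (r * t₁))
    left
    refine ⟨m / 2, by positivity, ?_⟩
    filter_upwards [eventually_le_atBot t₁, eventually_mul_exp_le (C / (r - k)) (half_pos hm)
      (tendsto_id.const_mul_atBot (sub_pos.2 hkr))] with t ht hP
    have := le_exp_neg_mul_mul_iff.1 (show m ≤ _ from hanti (ht.trans ht₁) ht₁ ht)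
    rw [neg_div, neg_mul, sub_neg_eq_add] at this
    linarith
  · right
    push Not at hpos
    filter_upwards [eventually_le_atBot s] with t ht
    have := exp_neg_mul_mul_le_iff.1 (hpos t ht)
    rw [neg_div] at this
    linarith

end LinearFirstOrder

section Blowup

variable {y y₁ : ℝ → ℝ}

theorem eventually_rpow_le_of_deriv_ge {Φ φ : ℝ → ℝ} {κ e : ℝ}
    (hΦ : ∀ t, HasDerivAt Φ (φ t) t) (hy : ∀ t, HasDerivAt y (y₁ t) t)
    (hyinf : Tendsto y atTop atTop) (hκ : 0 < κ) (he : 0 ≤ e)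
    (hφ : ∀ᶠ t in atTop, κ * y t ^ e * y₁ t ≤ φ t) :
    ∀ᶠ t in atTop, κ / (2 * (e + 1)) * y t ^ (e + 1) ≤ Φ t := by
  have hΨ : ∀ t, HasDerivAt (fun t => Φ t - κ / (e + 1) * y t ^ (e + 1))
      (φ t - κ * y t ^ e * y₁ t) t := fun t =>
    ((hΦ t).sub (((hy t).rpow_const (Or.inr (by linarith))).const_mul _)).congr_deriv (by
      rw [add_sub_cancel_right]; field_simp)
  obtain ⟨S, hS⟩ := exists_forall_ge_le_of_deriv_nonneg hΨ (hφ.mono fun t ht => sub_nonneg.2 ht)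
  have hpow : Tendsto (fun t => κ / (2 * (e + 1)) * y t ^ (e + 1)) atTop atTop :=
    ((tendsto_rpow_atTop (by linarith)).comp hyinf).const_mul_atTop (by positivity)
  filter_upwards [eventually_ge_atTop S,
    hpow.eventually_ge_atTop (-(Φ S - κ / (e + 1) * y S ^ (e + 1)))] with t ht hlarge
  have hsplit : κ / (e + 1) * y t ^ (e + 1) = 2 * (κ / (2 * (e + 1)) * y t ^ (e + 1)) := by
    field_simp
  linarith [hS t ht]

theorem not_rpow_le_deriv {c r : ℝ} (hy : ∀ t, HasDerivAt y (y₁ t) t) (hpos : ∀ t, 0 < y t)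
    (hr : 1 < r) (hc : 0 < c) (h : ∀ᶠ t in atTop, c * y t ^ r ≤ y₁ t) : False := by
  have hΨ : ∀ t, HasDerivAt (fun t => -y t ^ (1 - r) - (r - 1) * c * t)
      ((r - 1) * (y t ^ (-r) * y₁ t - c)) t := fun t =>
    (((hy t).rpow_const (Or.inl (hpos t).ne')).neg.sub
      ((hasDerivAt_id t).const_mul ((r - 1) * c))).congr_deriv (by
        rw [sub_sub_cancel_left]; ring)
  obtain ⟨S, hS⟩ := exists_forall_ge_le_of_deriv_nonneg hΨ (h.mono fun t ht => by
    have hinv : y t ^ (-r) * y t ^ r = 1 := by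
      rw [← rpow_add (hpos t), neg_add_cancel, rpow_zero]
    have hc : c ≤ y t ^ (-r) * y₁ t := calc
      c = y t ^ (-r) * (c * y t ^ r) := by rw [mul_left_comm, hinv, mul_one]
      _ ≤ y t ^ (-r) * y₁ t := mul_le_mul_of_nonneg_left ht (rpow_pos_of_pos (hpos t) _).le
    exact mul_nonneg (by linarith) (sub_nonneg.2 hc))
  obtain ⟨t, ht, hlt⟩ := ((eventually_ge_atTop S).and
    ((tendsto_id.const_mul_atTop_of_neg (by nlinarith : -((r - 1) * c) < 0)).eventually
      (eventually_lt_atBot (-y S ^ (1 - r) - (r - 1) * c * S)))).exists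
  have := hS t ht
  have := rpow_pos_of_pos (hpos t) (1 - r)
  simp only [id] at hlt
  linarith

theorem not_tendsto_atTop_of_fourth_order {y₂ y₃ y₄ : ℝ → ℝ} {κ p : ℝ}
    (hy : ∀ t, HasDerivAt y (y₁ t) t) (hy₁ : ∀ t, HasDerivAt y₁ (y₂ t) t)
    (hy₂ : ∀ t, HasDerivAt y₂ (y₃ t) t) (hy₃ : ∀ t, HasDerivAt y₃ (y₄ t) t)
    (hκ : 0 < κ) (hp : 1 < p) (hpos : ∀ t, 0 < y t) (hyinf : Tendsto y atTop atTop)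
    (h₁ : ∀ᶠ t in atTop, 0 < y₁ t) (h₄ : ∀ᶠ t in atTop, κ * y t ^ p ≤ y₄ t) : False := by
  -- Each energy identity trades one derivative of `y` for one more power of `y`.
  have hE₁ := eventually_rpow_le_of_deriv_ge (Φ := fun t => y₃ t * y₁ t - y₂ t ^ 2 / 2)
    (φ := fun t => y₄ t * y₁ t) (e := p)
    (fun t => (((hy₃ t).mul (hy₁ t)).sub (((hy₂ t).pow 2).div_const 2)).congr_deriv (by ring))
    hy hyinf hκ (by linarith) (by filter_upwards [h₁, h₄] with t h₁ h₄; nlinarith)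
  set κ₁ := κ / (2 * (p + 1))
  have hE₂ := eventually_rpow_le_of_deriv_ge (Φ := fun t => y₂ t * y₁ t ^ 2)
    (φ := fun t => y₃ t * y₁ t ^ 2 + 2 * y₂ t ^ 2 * y₁ t) (e := p + 1)
    (fun t => ((hy₂ t).mul ((hy₁ t).pow 2)).congr_deriv (by simp only [Pi.pow_apply]; ring))
    hy hyinf (by positivity : 0 < κ₁) (by linarith)
    (by filter_upwards [hE₁, h₁] with t hE₁ h₁; nlinarith [sq_nonneg (y₂ t)])
  set κ₂ := κ₁ / (2 * (p + 1 + 1))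
  have hE₃ := eventually_rpow_le_of_deriv_ge (Φ := fun t => y₁ t ^ 4)
    (φ := fun t => 4 * y₁ t ^ 3 * y₂ t) (e := p + 1 + 1)
    (fun t => ((hy₁ t).pow 4).congr_deriv (by ring))
    hy hyinf (by positivity : 0 < 4 * κ₂) (by linarith)
    (by filter_upwards [hE₂, h₁] with t hE₂ h₁; nlinarith)
  set κ₃ := 4 * κ₂ / (2 * (p + 1 + 1 + 1))
  have hκ₃ : 0 < κ₃ := by positivity
  refine not_rpow_le_deriv hy hpos (r := (p + 3) / 4) (c := κ₃ ^ (4⁻¹ : ℝ)) (by linarith)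
    (by positivity) ?_
  filter_upwards [hE₃, h₁] with t hE₃ h₁
  have hroot : (κ₃ ^ (4⁻¹ : ℝ) * y t ^ ((p + 3) / 4)) ^ 4 = κ₃ * y t ^ (p + 1 + 1 + 1) := by
    rw [mul_pow, ← rpow_natCast, ← rpow_natCast (y t ^ _), ← rpow_mul hκ₃.le,
      ← rpow_mul (hpos t).le]
    ring_nf
    simp only [rpow_one]
    ring
  exact (pow_le_pow_iff_left₀ (by have := hpos t; positivity) h₁.le (by norm_num)).1 (hroot ▸ hE₃)

end Blowup

structure SuperlinearSolution (a b c p : ℝ) (v v₁ v₂ v₃ G : ℝ → ℝ) : Prop where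
  a_pos : 0 < a
  a_lt_b : a < b
  c_pos : 0 < c
  one_lt_p : 1 < p
  hasDerivAt_v : ∀ t, HasDerivAt v (v₁ t) t
  hasDerivAt_v₁ : ∀ t, HasDerivAt v₁ (v₂ t) t
  hasDerivAt_v₂ : ∀ t, HasDerivAt v₂ (v₃ t) t
  hasDerivAt_v₃ : ∀ t, HasDerivAt v₃ ((a ^ 2 + b ^ 2) * v₂ t - a ^ 2 * b ^ 2 * v t + G t) t
  v_pos : ∀ t, 0 < v t
  G_pos : ∀ t, 0 < G t
  le_G : ∀ t, 1 ≤ v t → c * v t ^ p ≤ G t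

namespace SuperlinearSolution

def w (a : ℝ) (v v₁ : ℝ → ℝ) (t : ℝ) : ℝ := v₁ t - a * v t

def q (a b : ℝ) (v v₁ v₂ : ℝ → ℝ) (t : ℝ) : ℝ := v₂ t - (a + b) * v₁ t + a * b * v t

def z (a b : ℝ) (v v₁ v₂ v₃ : ℝ → ℝ) (t : ℝ) : ℝ :=
  v₃ t - a * v₂ t - b ^ 2 * v₁ t + a * b ^ 2 * v t

variable {a b c p : ℝ} {v v₁ v₂ v₃ G : ℝ → ℝ}

lemma hasDerivAt_v' (h : SuperlinearSolution a b c p v v₁ v₂ v₃ G) (t : ℝ) :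
    HasDerivAt v (a * v t + w a v v₁ t) t :=
  (h.hasDerivAt_v t).congr_deriv (by simp only [w]; ring)

lemma hasDerivAt_w (h : SuperlinearSolution a b c p v v₁ v₂ v₃ G) (t : ℝ) :
    HasDerivAt (w a v v₁) (b * w a v v₁ t + q a b v v₁ v₂ t) t :=
  ((h.hasDerivAt_v₁ t).sub ((h.hasDerivAt_v t).const_mul a)).congr_deriv
    (by simp only [w, q]; ring)

lemma hasDerivAt_q (h : SuperlinearSolution a b c p v v₁ v₂ v₃ G) (t : ℝ) :
    HasDerivAt (q a b v v₁ v₂) (-b * q a b v v₁ v₂ t + z a b v v₁ v₂ v₃ t) t :=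
  (((h.hasDerivAt_v₂ t).sub ((h.hasDerivAt_v₁ t).const_mul (a + b))).add
    ((h.hasDerivAt_v t).const_mul (a * b))).congr_deriv (by simp only [q, z]; ring)

lemma hasDerivAt_z (h : SuperlinearSolution a b c p v v₁ v₂ v₃ G) (t : ℝ) :
    HasDerivAt (z a b v v₁ v₂ v₃) (-a * z a b v v₁ v₂ v₃ t + G t) t :=
  ((((h.hasDerivAt_v₃ t).sub ((h.hasDerivAt_v₂ t).const_mul a)).sub
    ((h.hasDerivAt_v₁ t).const_mul (b ^ 2))).add
    ((h.hasDerivAt_v t).const_mul (a * b ^ 2))).congr_deriv (by simp only [z]; ring)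

lemma rev (h : SuperlinearSolution a b c p v v₁ v₂ v₃ G) :
    SuperlinearSolution a b c p (fun s => v (-s)) (fun s => -v₁ (-s)) (fun s => v₂ (-s))
    (fun s => -v₃ (-s)) (fun s => G (-s)) where
  a_pos := h.a_pos
  a_lt_b := h.a_lt_b
  c_pos := h.c_pos
  one_lt_p := h.one_lt_p
  hasDerivAt_v t := hasDerivAt_comp_neg (h.hasDerivAt_v (-t))
  hasDerivAt_v₁ t := (hasDerivAt_comp_neg (h.hasDerivAt_v₁ (-t))).neg.congr_deriv (neg_neg _)
  hasDerivAt_v₂ t := hasDerivAt_comp_neg (h.hasDerivAt_v₂ (-t))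
  hasDerivAt_v₃ t := (hasDerivAt_comp_neg (h.hasDerivAt_v₃ (-t))).neg.congr_deriv (neg_neg _)
  v_pos t := h.v_pos (-t)
  G_pos t := h.G_pos (-t)
  le_G t := h.le_G (-t)


theorem not_eventually_pos (h : SuperlinearSolution a b c p v v₁ v₂ v₃ G)
    (hw : ∀ᶠ t in atTop, 0 < w a v v₁ t) (hq : ∀ᶠ t in atTop, 0 ≤ q a b v v₁ v₂ t) : False := by
  have hvinf : Tendsto v atTop atTop :=
    tendsto_atTop_of_linear h.hasDerivAt_v' h.a_pos (hw.mono fun t ht => ht.le) h.v_pos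
  have hlin : ∀ᶠ t in atTop, a ^ 2 * b ^ 2 * v t ≤ c / 2 * v t ^ p := by
    filter_upwards [((tendsto_rpow_atTop (sub_pos.2 h.one_lt_p)).comp hvinf).eventually_ge_atTop
      (2 * a ^ 2 * b ^ 2 / c)] with t ht
    have hc := h.c_pos
    have hv := h.v_pos t
    calc a ^ 2 * b ^ 2 * v t = c / 2 * (2 * a ^ 2 * b ^ 2 / c) * v t := by field_simp
      _ ≤ c / 2 * v t ^ (p - 1) * v t := by gcongr; exact ht
      _ = c / 2 * v t ^ p := by rw [rpow_sub_one hv.ne', mul_assoc, div_mul_cancel₀ _ hv.ne']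
  refine not_tendsto_atTop_of_fourth_order h.hasDerivAt_v h.hasDerivAt_v₁ h.hasDerivAt_v₂
    h.hasDerivAt_v₃ (half_pos h.c_pos) h.one_lt_p h.v_pos hvinf ?_ ?_
  · filter_upwards [hw] with t hw
    have hv₁ : v₁ t = a * v t + w a v v₁ t := by simp only [w]; ring
    rw [hv₁]
    exact add_pos (mul_pos h.a_pos (h.v_pos t)) hw
  · filter_upwards [hw, hq, hlin, hvinf.eventually_ge_atTop 1] with t hw hq hlin hv
    have hv₂ : v₂ t = q a b v v₁ v₂ t + a ^ 2 * v t + (a + b) * w a v v₁ t := by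
      simp only [q, w]; ring
    have : 0 ≤ (a ^ 2 + b ^ 2) * v₂ t := by
      rw [hv₂]
      have := mul_nonneg (by linarith [h.a_pos, h.a_lt_b] : 0 ≤ a + b) hw.le
      have := h.v_pos t
      positivity
    linarith [h.le_G t hv]

theorem not_exp_le_atTop (h : SuperlinearSolution a b c p v v₁ v₂ v₃ G) {ε : ℝ} (hε : 0 < ε)
    (hv : ∀ᶠ t in atTop, ε * exp (b * t) ≤ v t) : False := by
  have hb : 0 < b := h.a_pos.trans h.a_lt_b
  have hvinf : Tendsto v atTop atTop := tendsto_atTop_mono' _ hv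
    ((tendsto_exp_atTop.comp (tendsto_id.const_mul_atTop hb)).const_mul_atTop hε)
  have hG : ∀ᶠ t in atTop, c * ε ^ p * exp (b * p * t) ≤ G t := by
    filter_upwards [hv, hvinf.eventually_ge_atTop 1] with t hvt hv1
    calc c * ε ^ p * exp (b * p * t) = c * (ε * exp (b * t)) ^ p := by
          rw [mul_rpow hε.le (exp_pos _).le, ← exp_mul]; ring_nf
      _ ≤ c * v t ^ p := mul_le_mul_of_nonneg_left
          (rpow_le_rpow (by positivity) hvt (by linarith [h.one_lt_p])) h.c_pos.le
      _ ≤ G t := h.le_G t hv1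
  have hbp : b < b * p := by nlinarith [h.one_lt_p]
  obtain ⟨C₁, hC₁, hz⟩ := exists_exp_le_atTop_of_linear h.hasDerivAt_z
    (by nlinarith [h.a_pos] : -a < b * p) (by have := h.c_pos; positivity) hG
  obtain ⟨C₂, hC₂, hq⟩ := exists_exp_le_atTop_of_linear h.hasDerivAt_q
    (by linarith : -b < b * p) hC₁ hz
  obtain ⟨C₃, hC₃, hw⟩ := exists_exp_le_atTop_of_linear h.hasDerivAt_w hbp hC₂ hq
  exact h.not_eventually_pos (hw.mono fun t => (mul_pos hC₃ (exp_pos _)).trans_le)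
    (hq.mono fun t => (mul_pos hC₂ (exp_pos _)).le.trans)

theorem not_q_le_neg_exp_atBot (h : SuperlinearSolution a b c p v v₁ v₂ v₃ G) {r C : ℝ}
    (hr : r < a) (hC : 0 < C) (hq : ∀ᶠ t in atBot, q a b v v₁ v₂ t ≤ -(C * exp (r * t))) :
    False := by
  obtain ⟨C₁, hC₁, hw⟩ := exists_exp_le_atBot_of_linear h.hasDerivAt_w (hr.trans h.a_lt_b) hC hq
  obtain ⟨C₂, hC₂, hv⟩ := exists_le_neg_exp_atBot_of_linear h.hasDerivAt_v' hr hC₁ hw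
  obtain ⟨t, ht⟩ := hv.exists
  linarith [h.v_pos t, mul_pos hC₂ (exp_pos (r * t))]

theorem not_exp_le_q_atBot (h : SuperlinearSolution a b c p v v₁ v₂ v₃ G) {m : ℝ} (hm : 0 < m)
    (hq : ∀ᶠ t in atBot, m * exp (-b * t) ≤ q a b v v₁ v₂ t) : False := by
  have hb : 0 < b := h.a_pos.trans h.a_lt_b
  obtain ⟨C₁, hC₁, hw⟩ := exists_le_neg_exp_atBot_of_linear h.hasDerivAt_w
    (by linarith : -b < b) hm hq
  obtain ⟨C₂, hC₂, hv⟩ := exists_exp_le_atBot_of_linear h.hasDerivAt_v'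
    (by linarith [h.a_pos] : -b < a) hC₁ hw
  exact h.rev.not_exp_le_atTop hC₂
    ((tendsto_neg_atTop_atBot.eventually hv).mono fun s hs => by simpa using hs)

theorem z_pos (h : SuperlinearSolution a b c p v v₁ v₂ v₃ G) (t : ℝ) :
    0 < z a b v v₁ v₂ v₃ t := by
  by_contra! hz
  obtain ⟨ε, hε, hzneg⟩ := exists_le_neg_exp_atBot_of_linear_of_nonpos h.hasDerivAt_z h.G_pos hz
  rcases exp_le_or_le_neg_exp_atBot_of_linear h.hasDerivAt_q (by linarith [h.a_lt_b] : -b < -a)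
    hzneg with ⟨m, hm, hq⟩ | hq
  · exact h.not_exp_le_q_atBot hm hq
  · exact h.not_q_le_neg_exp_atBot (by linarith [h.a_pos] : -a < a)
      (div_pos hε (by linarith [h.a_lt_b])) hq

theorem q_pos (h : SuperlinearSolution a b c p v v₁ v₂ v₃ G) (t : ℝ) : 0 < q a b v v₁ v₂ t := by
  by_contra! hq
  obtain ⟨ε, hε, hqneg⟩ := exists_le_neg_exp_atBot_of_linear_of_nonpos h.hasDerivAt_q h.z_pos hq
  exact h.not_q_le_neg_exp_atBot (by linarith [h.a_pos, h.a_lt_b] : -b < a) hε hqneg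

theorem w_neg (h : SuperlinearSolution a b c p v v₁ v₂ v₃ G) (t : ℝ) : w a v v₁ t < 0 := by
  by_contra! hw
  exact h.not_eventually_pos
    ((eventually_gt_atTop t).mono fun s hs => pos_of_linear_of_nonneg h.hasDerivAt_w h.q_pos hw hs)
    (Eventually.of_forall fun s => (h.q_pos s).le)

end SuperlinearSolution

theorem stmt_15 (n : ℕ) (hn : 5 ≤ n) (g : ℝ → ℝ) (hg : CondG n g)
    (A B : ℝ) (hA : A = ((n : ℝ) * ((n : ℝ) - 4) + 8) / 2)
    (hB : B = (n : ℝ) ^ 2 * ((n : ℝ) - 4) ^ 2 / 16)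
    (v : ℝ → ℝ) (hv4 : ContDiff ℝ 4 v) (hvpos : ∀ t, 0 < v t) (hvsol : IsSol A B g v) :
    ∀ t : ℝ, deriv v t < (((n : ℝ) - 4) / 2) * v t := by
  have hn' : (5 : ℝ) ≤ n := by exact_mod_cast hn
  obtain ⟨p, c, hp, hc, hgrowth⟩ := hg.2.2.2.2.2.1
  have hsol : SuperlinearSolution (((n : ℝ) - 4) / 2) ((n : ℝ) / 2) c p v (iteratedDeriv 1 v)
      (iteratedDeriv 2 v) (iteratedDeriv 3 v) (fun t => g (v t)) :=
    { a_pos := by linarith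
      a_lt_b := by linarith
      c_pos := hc
      one_lt_p := hp
      hasDerivAt_v := by simpa using hv4.hasDerivAt_iteratedDeriv (k := 0) (by norm_num)
      hasDerivAt_v₁ := hv4.hasDerivAt_iteratedDeriv (k := 1) (by norm_num)
      hasDerivAt_v₂ := hv4.hasDerivAt_iteratedDeriv (k := 2) (by norm_num)
      hasDerivAt_v₃ := fun t =>
        (hv4.hasDerivAt_iteratedDeriv (k := 3) (by norm_num) t).congr_deriv (by
          subst hA hB
          linear_combination hvsol t)
      v_pos := hvpos
      G_pos := fun t => hg.2.1 _ (hvpos t)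
      le_G := fun t => hgrowth _ }
  intro t
  simpa [SuperlinearSolution.w, sub_neg] using hsol.w_neg t
end
end

section
/- Let n ≥ 5 be an integer and let φ be a C⁴ function on ℝⁿ \ {0}. Define its Kelvin transform φ*(x) = |x|^{−(n−4)}·φ(x/|x|²) for x ∈ ℝⁿ \ {0}. Then for all x ∈ ℝⁿ \ {0}, Δ²φ*(x) = |x|^{−n−4}·(Δ²φ)(x/|x|²). -/
open Real Filter Set

noncomputable section

/-- The Laplacian of `f : ℝⁿ → ℝ`, as the sum of the second partial derivatives. -/
def lap (n : ℕ) (f : EuclideanSpace ℝ (Fin n) → ℝ) (x : EuclideanSpace ℝ (Fin n)) : ℝ :=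
  ∑ i : Fin n,
    fderiv ℝ (fun y => fderiv ℝ f y (EuclideanSpace.single i 1)) x (EuclideanSpace.single i 1)

/-- The Bilaplacian `Δ² = Δ ∘ Δ`. -/
def bilap (n : ℕ) (f : EuclideanSpace ℝ (Fin n) → ℝ) : EuclideanSpace ℝ (Fin n) → ℝ :=
  lap n (lap n f)

/-!
Write `σ x = x / ‖x‖²` and `K ψ x = ‖x‖ ^ (2 - n) * ψ (σ x)`, and let `E = ∑ xⱼ ∂ⱼ` be the Euler
operator. Since `σ` is conformal with factor `‖x‖⁻²` and `Δ σⱼ = (4 - 2n) xⱼ / ‖x‖⁴`, the chain rule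
gives `Δ (ψ ∘ σ) = ‖x‖⁻⁴ (Δψ) ∘ σ + (4 - 2n) ‖x‖⁻² (Eψ) ∘ σ`; the product rule for `‖x‖ ^ (2 - n)`
cancels the Euler term, so `Δ (K ψ) = ‖x‖⁻⁴ K (Δψ)`. As `φ* = K (‖y‖⁻² φ)`, applying this twice
gives `Δ² φ* = ‖x‖⁻⁴ K (Δ (‖y‖⁴ Δ (‖y‖⁻² φ)))`, and `Δ (‖y‖⁴ Δ (‖y‖⁻² φ)) = ‖y‖² Δ² φ`:
after expanding with the product rule the Euler terms cancel by `[Δ, E] = 2 Δ`.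
-/

open scoped Topology

local notation "ℝ^" n:max => EuclideanSpace ℝ (Fin n)

section PartialDerivatives

variable {n : ℕ} {f g : ℝ^n → ℝ} {x : ℝ^n} {i j : Fin n}

def pderiv (i : Fin n) (f : ℝ^n → ℝ) (x : ℝ^n) : ℝ :=
  fderiv ℝ f x (EuclideanSpace.single i 1)

theorem lap_eq_sum_pderiv (f : ℝ^n → ℝ) (x : ℝ^n) :
    lap n f x = ∑ i, pderiv i (pderiv i f) x :=
  rfl

theorem pderiv_congr_nhds (h : f =ᶠ[𝓝 x] g) : pderiv i f x = pderiv i g x := by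
  rw [pderiv, pderiv, h.fderiv_eq]

theorem Filter.EventuallyEq.pderiv (h : f =ᶠ[𝓝 x] g) :
    _root_.pderiv i f =ᶠ[𝓝 x] _root_.pderiv i g :=
  h.fderiv.mono fun z hz => by rw [_root_.pderiv, _root_.pderiv, hz]

theorem lap_congr_nhds (h : f =ᶠ[𝓝 x] g) : lap n f x = lap n g x := by
  simp only [lap_eq_sum_pderiv, pderiv_congr_nhds h.pderiv]

theorem ContDiffAt.pderiv {m k : WithTop ℕ∞} (hf : ContDiffAt ℝ k f x) (hmk : m + 1 ≤ k) :
    ContDiffAt ℝ m (pderiv i f) x :=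
  (hf.fderiv_right hmk).clm_apply contDiffAt_const

theorem ContDiffAt.lap {m k : WithTop ℕ∞} (hf : ContDiffAt ℝ k f x) (hmk : m + 2 ≤ k) :
    ContDiffAt ℝ m (lap n f) x := by
  have h2 : (m + 1) + 1 ≤ k := by rwa [add_assoc, one_add_one_eq_two]
  exact ContDiffAt.sum fun i _ => (hf.pderiv h2).pderiv le_rfl

theorem differentiableAt_pderiv (hf : ContDiffAt ℝ 2 f x) : DifferentiableAt ℝ (pderiv i f) x :=
  (hf.pderiv (m := 1) (by norm_num)).differentiableAt one_ne_zero

theorem pderiv_add (hf : DifferentiableAt ℝ f x) (hg : DifferentiableAt ℝ g x) :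
    pderiv i (fun z => f z + g z) x = pderiv i f x + pderiv i g x := by
  simp [pderiv, fderiv_fun_add hf hg]

theorem pderiv_mul (hf : DifferentiableAt ℝ f x) (hg : DifferentiableAt ℝ g x) :
    pderiv i (fun z => f z * g z) x = pderiv i f x * g x + f x * pderiv i g x := by
  simp only [pderiv, fderiv_fun_mul hf hg, add_apply,
    smul_apply, smul_eq_mul]
  ring

theorem pderiv_const_mul (c : ℝ) (hf : DifferentiableAt ℝ f x) :
    pderiv i (fun z => c * f z) x = c * pderiv i f x := by
  simp [pderiv, fderiv_const_mul hf]

theorem pderiv_sum {ι : Type*} {s : Finset ι} {F : ι → ℝ^n → ℝ}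
    (hF : ∀ k ∈ s, DifferentiableAt ℝ (F k) x) :
    pderiv i (fun z => ∑ k ∈ s, F k z) x = ∑ k ∈ s, pderiv i (F k) x := by
  simp [pderiv, fderiv_fun_sum hF]

theorem pderiv_const (c : ℝ) : pderiv i (fun _ : ℝ^n => c) x = 0 := by
  simp [pderiv]

theorem differentiableAt_coord (j : Fin n) : DifferentiableAt ℝ (fun z : ℝ^n => z j) x :=
  (EuclideanSpace.proj (𝕜 := ℝ) j).differentiableAt

theorem pderiv_coord (j : Fin n) (x : ℝ^n) :
    pderiv i (fun z : ℝ^n => z j) x = if i = j then 1 else 0 := by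
  rw [pderiv, show (fun z : ℝ^n => z j) = EuclideanSpace.proj (𝕜 := ℝ) j from rfl,
    ContinuousLinearMap.fderiv]
  simp [eq_comm]

theorem ContinuousLinearMap.apply_eq_sum_mul_single (L : ℝ^n →L[ℝ] ℝ) (v : ℝ^n) :
    L v = ∑ j, v j * L (EuclideanSpace.single j 1) := by
  conv_lhs => rw [← (EuclideanSpace.basisFun (Fin n) ℝ).sum_repr v]
  simp

theorem pderiv_comp {m : ℕ} {φ : ℝ^m → ℝ} {g : ℝ^n → ℝ^m}
    (hφ : DifferentiableAt ℝ φ (g x)) (hg : DifferentiableAt ℝ g x) :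
    pderiv i (fun z => φ (g z)) x = ∑ j, pderiv j φ (g x) * pderiv i (fun z => g z j) x := by
  have hcoord (j : Fin m) :
      pderiv i (fun z => g z j) x = fderiv ℝ g x (EuclideanSpace.single i 1) j := by
    have h : HasFDerivAt (fun z => g z j) ((EuclideanSpace.proj j).comp (fderiv ℝ g x)) x :=
      (EuclideanSpace.proj (𝕜 := ℝ) j).hasFDerivAt.comp x hg.hasFDerivAt
    rw [pderiv, h.fderiv]
    rfl
  simp only [hcoord]
  rw [pderiv, fderiv_fun_comp x hφ hg, ContinuousLinearMap.comp_apply,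
    ContinuousLinearMap.apply_eq_sum_mul_single]
  simp only [pderiv, mul_comm]

theorem pderiv_comm (hf : ContDiffAt ℝ 2 f x) :
    pderiv i (pderiv j f) x = pderiv j (pderiv i f) x := by
  have hd : DifferentiableAt ℝ (fderiv ℝ f) x :=
    (hf.fderiv_right (m := 1) (by norm_num)).differentiableAt one_ne_zero
  have h2 (a b : Fin n) : pderiv a (pderiv b f) x =
      fderiv ℝ (fderiv ℝ f) x (EuclideanSpace.single a 1) (EuclideanSpace.single b 1) := by
    unfold pderiv
    rw [fderiv_clm_apply hd (differentiableAt_const _)]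
    simp
  rw [h2, h2, hf.isSymmSndFDerivAt (by simp [minSmoothness_of_isRCLikeNormedField])]

end PartialDerivatives

section Laplacian

variable {n : ℕ} {f g : ℝ^n → ℝ} {x : ℝ^n}

theorem lap_add (hf : ContDiffAt ℝ 2 f x) (hg : ContDiffAt ℝ 2 g x) :
    lap n (fun z => f z + g z) x = lap n f x + lap n g x := by
  have hpd (i : Fin n) :
      pderiv i (fun z => f z + g z) =ᶠ[𝓝 x] fun z => pderiv i f z + pderiv i g z :=
    ((hf.eventually (by simp)).and (hg.eventually (by simp))).mono fun z hz =>
      pderiv_add (hz.1.differentiableAt two_ne_zero) (hz.2.differentiableAt two_ne_zero)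
  simp only [lap_eq_sum_pderiv, pderiv_congr_nhds (hpd _),
    pderiv_add (differentiableAt_pderiv hf) (differentiableAt_pderiv hg), Finset.sum_add_distrib]

theorem lap_const_mul (c : ℝ) (hf : ContDiffAt ℝ 2 f x) :
    lap n (fun z => c * f z) x = c * lap n f x := by
  have hpd (i : Fin n) : pderiv i (fun z => c * f z) =ᶠ[𝓝 x] fun z => c * pderiv i f z :=
    (hf.eventually (by simp)).mono fun z hz => pderiv_const_mul c (hz.differentiableAt two_ne_zero)
  simp only [lap_eq_sum_pderiv, pderiv_congr_nhds (hpd _),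
    pderiv_const_mul c (differentiableAt_pderiv hf), Finset.mul_sum]

theorem lap_mul (hf : ContDiffAt ℝ 2 f x) (hg : ContDiffAt ℝ 2 g x) :
    lap n (fun z => f z * g z) x =
      lap n f x * g x + 2 * ∑ i, pderiv i f x * pderiv i g x + f x * lap n g x := by
  have hpd (i : Fin n) : pderiv i (fun z => f z * g z) =ᶠ[𝓝 x]
      fun z => pderiv i f z * g z + f z * pderiv i g z :=
    ((hf.eventually (by simp)).and (hg.eventually (by simp))).mono fun z hz =>
      pderiv_mul (hz.1.differentiableAt two_ne_zero) (hz.2.differentiableAt two_ne_zero)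
  have hf₁ := hf.differentiableAt two_ne_zero
  have hg₁ := hg.differentiableAt two_ne_zero
  have hf₂ (i : Fin n) := differentiableAt_pderiv (i := i) hf
  have hg₂ (i : Fin n) := differentiableAt_pderiv (i := i) hg
  have hterm (i : Fin n) : pderiv i (fun z => pderiv i f z * g z + f z * pderiv i g z) x =
      pderiv i (pderiv i f) x * g x + 2 * (pderiv i f x * pderiv i g x) +
        f x * pderiv i (pderiv i g) x := by
    rw [pderiv_add ((hf₂ i).fun_mul hg₁) (hf₁.fun_mul (hg₂ i)), pderiv_mul (hf₂ i) hg₁,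
      pderiv_mul hf₁ (hg₂ i)]
    ring
  simp only [lap_eq_sum_pderiv, pderiv_congr_nhds (hpd _), hterm, Finset.sum_add_distrib,
    Finset.sum_mul, Finset.mul_sum]

theorem lap_coord (j : Fin n) : lap n (fun z : ℝ^n => z j) x = 0 := by
  have hpd (i : Fin n) : pderiv i (fun z : ℝ^n => z j) = fun _ => if i = j then 1 else 0 :=
    funext (pderiv_coord j)
  simp only [lap_eq_sum_pderiv, hpd, pderiv_const, Finset.sum_const_zero]

theorem lap_comp {m : ℕ} {φ : ℝ^m → ℝ} {g : ℝ^n → ℝ^m}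
    (hφ : ContDiffAt ℝ 2 φ (g x)) (hg : ContDiffAt ℝ 2 g x) :
    lap n (fun z => φ (g z)) x =
      ∑ j, ∑ k, pderiv k (pderiv j φ) (g x) *
          ∑ i, pderiv i (fun z => g z j) x * pderiv i (fun z => g z k) x +
        ∑ j, pderiv j φ (g x) * lap n (fun z => g z j) x := by
  have hgj (j : Fin m) : ContDiffAt ℝ 2 (fun z => g z j) x :=
    (EuclideanSpace.proj (𝕜 := ℝ) j).contDiff.contDiffAt.comp (f := g) x hg
  have hpd (i : Fin n) : pderiv i (fun z => φ (g z)) =ᶠ[𝓝 x]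
      fun z => ∑ j, pderiv j φ (g z) * pderiv i (fun z => g z j) z :=
    ((hg.continuousAt.eventually (hφ.eventually (by simp))).and (hg.eventually (by simp))).mono
      fun z hz =>
        pderiv_comp (hz.1.differentiableAt two_ne_zero) (hz.2.differentiableAt two_ne_zero)
  have hφg (j : Fin m) : DifferentiableAt ℝ (fun z => pderiv j φ (g z)) x :=
    (differentiableAt_pderiv hφ).comp x (hg.differentiableAt two_ne_zero)
  have hterm (i : Fin n) :
      pderiv i (fun z => ∑ j, pderiv j φ (g z) * pderiv i (fun z => g z j) z) x =
        ∑ j, ∑ k, pderiv k (pderiv j φ) (g x) *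
            (pderiv i (fun z => g z j) x * pderiv i (fun z => g z k) x) +
          ∑ j, pderiv j φ (g x) * pderiv i (pderiv i fun z => g z j) x := by
    rw [pderiv_sum fun j _ => (hφg j).fun_mul (differentiableAt_pderiv (hgj j)),
      ← Finset.sum_add_distrib]
    refine Finset.sum_congr rfl fun j _ => ?_
    rw [pderiv_mul (hφg j) (differentiableAt_pderiv (hgj j)),
      pderiv_comp (differentiableAt_pderiv hφ) (hg.differentiableAt two_ne_zero), Finset.sum_mul]
    congr 1
    exact Finset.sum_congr rfl fun k _ => by ring
  simp only [lap_eq_sum_pderiv, pderiv_congr_nhds (hpd _), hterm, Finset.sum_add_distrib,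
    Finset.mul_sum]
  congr 1
  · rw [Finset.sum_comm]
    refine Finset.sum_congr rfl fun j _ => ?_
    rw [Finset.sum_comm]
  · rw [Finset.sum_comm]

end Laplacian

section Euler

variable {n : ℕ} {f : ℝ^n → ℝ} {x : ℝ^n}

def euler (f : ℝ^n → ℝ) (x : ℝ^n) : ℝ := ∑ j, x j * pderiv j f x

theorem ContDiffAt.euler {m k : WithTop ℕ∞} (hf : ContDiffAt ℝ k f x) (hmk : m + 1 ≤ k) :
    ContDiffAt ℝ m (euler f) x :=
  ContDiffAt.sum fun j _ =>
    (EuclideanSpace.proj (𝕜 := ℝ) j).contDiff.contDiffAt.mul (hf.pderiv hmk)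

theorem euler_coord (j : Fin n) : euler (fun z : ℝ^n => z j) x = x j := by
  simp [euler, pderiv_coord]

theorem euler_comp {m : ℕ} {φ : ℝ^m → ℝ} {g : ℝ^n → ℝ^m}
    (hφ : DifferentiableAt ℝ φ (g x)) (hg : DifferentiableAt ℝ g x) :
    euler (fun z => φ (g z)) x = ∑ j, pderiv j φ (g x) * euler (fun z => g z j) x := by
  simp only [euler, pderiv_comp hφ hg, Finset.mul_sum]
  rw [Finset.sum_comm]
  exact Finset.sum_congr rfl fun j _ => Finset.sum_congr rfl fun i _ => by ring

theorem pderiv_euler {i : Fin n} (hf : ContDiffAt ℝ 2 f x) :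
    pderiv i (euler f) x = pderiv i f x + euler (pderiv i f) x := by
  have hterm (j : Fin n) : pderiv i (fun z => z j * pderiv j f z) x =
      (if i = j then pderiv j f x else 0) + x j * pderiv j (pderiv i f) x := by
    rw [pderiv_mul (differentiableAt_coord j) (differentiableAt_pderiv hf), pderiv_coord,
      pderiv_comm hf]
    split_ifs <;> ring
  rw [show euler f = fun z => ∑ j, z j * pderiv j f z from rfl,
    pderiv_sum fun j _ => (differentiableAt_coord j).fun_mul (differentiableAt_pderiv hf)]
  simp only [hterm, Finset.sum_add_distrib, Finset.sum_ite_eq, Finset.mem_univ, if_true, euler]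

theorem lap_euler (hf : ContDiffAt ℝ 3 f x) :
    lap n (euler f) x = euler (lap n f) x + 2 * lap n f x := by
  have hf₂ : ContDiffAt ℝ 2 f x := hf.of_le (by norm_num)
  have hpf (i : Fin n) : ContDiffAt ℝ 2 (pderiv i f) x := hf.pderiv (by norm_num)
  have hpd (i : Fin n) : pderiv i (euler f) =ᶠ[𝓝 x]
      fun z => pderiv i f z + euler (pderiv i f) z :=
    (hf₂.eventually (by simp)).mono fun z hz => pderiv_euler hz
  have hterm (i : Fin n) : pderiv i (fun z => pderiv i f z + euler (pderiv i f) z) x =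
      2 * pderiv i (pderiv i f) x + euler (pderiv i (pderiv i f)) x := by
    rw [pderiv_add (differentiableAt_pderiv hf₂)
      (((hpf i).euler (m := 1) (by norm_num)).differentiableAt one_ne_zero), pderiv_euler (hpf i)]
    ring
  have heuler : euler (lap n f) x = ∑ i, euler (pderiv i (pderiv i f)) x := by
    have hlap : lap n f = fun z => ∑ i, pderiv i (pderiv i f) z := rfl
    simp only [euler, hlap, pderiv_sum fun i _ => differentiableAt_pderiv (hpf i), Finset.mul_sum]
    exact Finset.sum_comm
  simp only [lap_eq_sum_pderiv, pderiv_congr_nhds (hpd _), hterm, Finset.sum_add_distrib, heuler,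
    Finset.mul_sum]
  ring

end Euler

theorem Real.rpow_sub_two {r : ℝ} (hr : r ≠ 0) (p : ℝ) : r ^ (p - 2) = r ^ p / r ^ 2 := by
  simpa using Real.rpow_sub_natCast hr p 2

section RadialPowers

variable {n : ℕ} {f : ℝ^n → ℝ} {x : ℝ^n}

theorem contDiffAt_norm_rpow {k : WithTop ℕ∞} (hx : x ≠ 0) (p : ℝ) :
    ContDiffAt ℝ k (fun z : ℝ^n => ‖z‖ ^ p) x :=
  (contDiffAt_norm ℝ hx).rpow_const_of_ne (norm_ne_zero_iff.2 hx)

theorem pderiv_norm_rpow (hx : x ≠ 0) (p : ℝ) (i : Fin n) :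
    pderiv i (fun z => ‖z‖ ^ p) x = p * ‖x‖ ^ (p - 2) * x i := by
  have hsq (q : ℝ) (z : ℝ^n) : ‖z‖ ^ q = (‖z‖ ^ 2) ^ (q / 2) := by
    rw [← Real.rpow_natCast, ← Real.rpow_mul (norm_nonneg z)]
    ring_nf
  have hd := (hasStrictFDerivAt_norm_sq x).hasFDerivAt.rpow_const (p := p / 2)
    (Or.inl (pow_ne_zero 2 (norm_ne_zero_iff.2 hx)))
  rw [pderiv, funext (hsq p), hd.fderiv, hsq (p - 2)]
  simp only [smul_apply, innerSL_apply_apply,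
    EuclideanSpace.inner_single_right, RCLike.conj_to_real, one_mul, nsmul_eq_mul, Nat.cast_ofNat,
    smul_eq_mul]
  ring_nf

theorem lap_norm_rpow (hx : x ≠ 0) (p : ℝ) :
    lap n (fun z => ‖z‖ ^ p) x = p * (p + n - 2) * ‖x‖ ^ (p - 2) := by
  have hpd (i : Fin n) : pderiv i (fun z => ‖z‖ ^ p) =ᶠ[𝓝 x] fun z => p * ‖z‖ ^ (p - 2) * z i :=
    (eventually_ne_nhds hx).mono fun z hz => pderiv_norm_rpow hz p i
  have hterm (i : Fin n) : pderiv i (fun z => p * ‖z‖ ^ (p - 2) * z i) x =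
      p * (p - 2) * ‖x‖ ^ (p - 2 - 2) * x i ^ 2 + p * ‖x‖ ^ (p - 2) := by
    have hd : DifferentiableAt ℝ (fun z : ℝ^n => ‖z‖ ^ (p - 2)) x :=
      (contDiffAt_norm_rpow (k := 1) hx _).differentiableAt one_ne_zero
    rw [pderiv_mul (hd.const_mul p) (differentiableAt_coord i), pderiv_const_mul p hd,
      pderiv_norm_rpow hx, pderiv_coord, if_pos rfl]
    ring
  simp only [lap_eq_sum_pderiv, pderiv_congr_nhds (hpd _), hterm, Finset.sum_add_distrib,
    ← Finset.mul_sum, ← EuclideanSpace.real_norm_sq_eq, Finset.sum_const, Finset.card_univ,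
    Fintype.card_fin, nsmul_eq_mul]
  rw [Real.rpow_sub_two (norm_ne_zero_iff.2 hx) (p - 2)]
  field_simp
  ring

theorem lap_norm_rpow_mul (hf : ContDiffAt ℝ 2 f x) (hx : x ≠ 0) (p : ℝ) :
    lap n (fun z => ‖z‖ ^ p * f z) x =
      ‖x‖ ^ p * lap n f x + 2 * p * ‖x‖ ^ (p - 2) * euler f x +
        p * (p + n - 2) * ‖x‖ ^ (p - 2) * f x := by
  have hgrad :
      ∑ i, pderiv i (fun z => ‖z‖ ^ p) x * pderiv i f x = p * ‖x‖ ^ (p - 2) * euler f x := by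
    simp only [pderiv_norm_rpow hx, euler, Finset.mul_sum]
    exact Finset.sum_congr rfl fun i _ => by ring
  rw [lap_mul (contDiffAt_norm_rpow hx p) hf, lap_norm_rpow hx, hgrad]
  ring

theorem lap_norm_rpow_four_mul_lap_norm_rpow_neg_two_mul {φ : ℝ^n → ℝ} (hφ : ContDiffAt ℝ 4 φ x)
    (hx : x ≠ 0) :
    lap n (fun z => ‖z‖ ^ (4 : ℝ) * lap n (fun w => ‖w‖ ^ (-2 : ℝ) * φ w) z) x =
      ‖x‖ ^ (2 : ℝ) * bilap n φ x := by
  have hφ₂ : ContDiffAt ℝ 2 φ x := hφ.of_le (by norm_num)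
  have hlap : ContDiffAt ℝ 2 (lap n φ) x := hφ.lap (by norm_num)
  have heuler : ContDiffAt ℝ 2 (euler φ) x := hφ.euler (by norm_num)
  have hinner : (fun z => ‖z‖ ^ (4 : ℝ) * lap n (fun w => ‖w‖ ^ (-2 : ℝ) * φ w) z) =ᶠ[𝓝 x]
      fun z => ‖z‖ ^ (2 : ℝ) * lap n φ z + -4 * euler φ z + -2 * (n - 4) * φ z := by
    filter_upwards [eventually_ne_nhds hx, hφ₂.eventually (by simp)] with z hz hφz
    have hr : 0 < ‖z‖ := norm_pos_iff.2 hz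
    have e₂ : ‖z‖ ^ (4 : ℝ) * ‖z‖ ^ (-2 : ℝ) = ‖z‖ ^ (2 : ℝ) := by
      rw [← Real.rpow_add hr]; norm_num
    have e₀ : ‖z‖ ^ (4 : ℝ) * ‖z‖ ^ (-2 - 2 : ℝ) = 1 := by
      rw [← Real.rpow_add hr]; norm_num
    rw [lap_norm_rpow_mul hφz hz]
    linear_combination lap n φ z * e₂ + (-4 * euler φ z + -2 * (n - 4) * φ z) * e₀
  rw [lap_congr_nhds hinner,
    lap_add (((contDiffAt_norm_rpow hx _).mul hlap).add (contDiffAt_const.mul heuler))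
      (contDiffAt_const.mul hφ₂),
    lap_add ((contDiffAt_norm_rpow hx _).mul hlap) (contDiffAt_const.mul heuler),
    lap_const_mul _ heuler, lap_const_mul _ hφ₂, lap_norm_rpow_mul hlap hx,
    lap_euler (hφ.of_le (by norm_num)), bilap, show (2 - 2 : ℝ) = 0 by norm_num, Real.rpow_zero]
  ring

end RadialPowers

section Inversion

variable {n : ℕ} {x : ℝ^n}

def sphereInversion (x : ℝ^n) : ℝ^n := (‖x‖ ^ 2)⁻¹ • x

theorem sphereInversion_apply (x : ℝ^n) (j : Fin n) : sphereInversion x j = x j / ‖x‖ ^ 2 := by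
  simp [sphereInversion, div_eq_inv_mul]

theorem sphereInversion_apply_eq_norm_rpow_mul (z : ℝ^n) (j : Fin n) :
    sphereInversion z j = ‖z‖ ^ (-2 : ℝ) * z j := by
  rw [sphereInversion_apply, Real.rpow_neg (norm_nonneg z), Real.rpow_two, div_eq_inv_mul]

theorem norm_sphereInversion (x : ℝ^n) : ‖sphereInversion x‖ = ‖x‖⁻¹ := by
  rw [sphereInversion, norm_smul, norm_inv, norm_pow, norm_norm]
  rcases eq_or_ne ‖x‖ 0 with h | h
  · simp [h]
  · field_simp

theorem sphereInversion_ne_zero (hx : x ≠ 0) : sphereInversion x ≠ 0 := by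
  rw [← norm_ne_zero_iff, norm_sphereInversion]
  exact inv_ne_zero (norm_ne_zero_iff.2 hx)

theorem contDiffAt_sphereInversion {k : WithTop ℕ∞} (hx : x ≠ 0) :
    ContDiffAt ℝ k sphereInversion x :=
  ((contDiff_norm_sq ℝ).contDiffAt.inv (pow_ne_zero 2 (norm_ne_zero_iff.2 hx))).smul contDiffAt_id

theorem pderiv_sphereInversion_apply (hx : x ≠ 0) (i j : Fin n) :
    pderiv i (fun z => sphereInversion z j) x =
      (if i = j then 1 else 0) / ‖x‖ ^ 2 - 2 * x i * x j / ‖x‖ ^ 4 := by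
  have hd : DifferentiableAt ℝ (fun z : ℝ^n => ‖z‖ ^ (-2 : ℝ)) x :=
    (contDiffAt_norm_rpow (k := 1) hx _).differentiableAt one_ne_zero
  simp only [sphereInversion_apply_eq_norm_rpow_mul]
  rw [pderiv_mul hd (differentiableAt_coord j), pderiv_norm_rpow hx, pderiv_coord]
  simp only [show (-2 - 2 : ℝ) = -4 by norm_num, Real.rpow_neg_ofNat, zpow_neg, zpow_ofNat]
  field_simp
  ring

theorem sum_pderiv_sphereInversion_mul (hx : x ≠ 0) (j k : Fin n) :
    ∑ i, pderiv i (fun z => sphereInversion z j) x * pderiv i (fun z => sphereInversion z k) x =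
      (if j = k then 1 else 0) / ‖x‖ ^ 4 := by
  have hr : ‖x‖ ≠ 0 := norm_ne_zero_iff.2 hx
  have hterm (i : Fin n) :
      pderiv i (fun z => sphereInversion z j) x * pderiv i (fun z => sphereInversion z k) x =
        (if i = j then 1 else 0) * (if i = k then 1 else 0) / ‖x‖ ^ 4 -
          2 * ((if i = j then x i * x k else 0) + (if i = k then x i * x j else 0)) / ‖x‖ ^ 6 +
          4 * x j * x k / ‖x‖ ^ 8 * x i ^ 2 := by
    rw [pderiv_sphereInversion_apply hx, pderiv_sphereInversion_apply hx]
    split_ifs <;> field_simp <;> ring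
  simp only [hterm, Finset.sum_add_distrib, Finset.sum_sub_distrib, ← Finset.sum_div,
    ← Finset.mul_sum, ← EuclideanSpace.real_norm_sq_eq, ite_mul, one_mul, zero_mul,
    Finset.sum_ite_eq', Finset.mem_univ, if_true]
  split_ifs with h
  · subst h; field_simp; ring
  · field_simp; ring

theorem lap_sphereInversion_apply (hx : x ≠ 0) (j : Fin n) :
    lap n (fun z => sphereInversion z j) x = (4 - 2 * n) * x j / ‖x‖ ^ 4 := by
  have hcoord : ContDiffAt ℝ 2 (fun z : ℝ^n => z j) x :=
    (EuclideanSpace.proj (𝕜 := ℝ) j).contDiff.contDiffAt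
  simp only [sphereInversion_apply_eq_norm_rpow_mul]
  rw [lap_norm_rpow_mul hcoord hx, lap_coord, euler_coord]
  simp only [show (-2 - 2 : ℝ) = -4 by norm_num, Real.rpow_neg_ofNat, zpow_neg, zpow_ofNat]
  field_simp
  ring

theorem euler_sphereInversion_apply (hx : x ≠ 0) (j : Fin n) :
    euler (fun z => sphereInversion z j) x = -sphereInversion x j := by
  have hr : ‖x‖ ≠ 0 := norm_ne_zero_iff.2 hx
  have hterm (i : Fin n) : x i * pderiv i (fun z => sphereInversion z j) x =
      (if i = j then x j else 0) / ‖x‖ ^ 2 - 2 * x j / ‖x‖ ^ 4 * x i ^ 2 := by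
    rw [pderiv_sphereInversion_apply hx]
    split_ifs with h
    · subst h; ring
    · ring
  rw [euler, sphereInversion_apply]
  simp only [hterm, Finset.sum_sub_distrib, ← Finset.sum_div, Finset.sum_ite_eq',
    Finset.mem_univ, if_true, ← Finset.mul_sum, ← EuclideanSpace.real_norm_sq_eq]
  field_simp
  ring

theorem euler_comp_sphereInversion {ψ : ℝ^n → ℝ} (hψ : DifferentiableAt ℝ ψ (sphereInversion x))
    (hx : x ≠ 0) : euler (fun z => ψ (sphereInversion z)) x = -euler ψ (sphereInversion x) := by
  rw [euler_comp hψ ((contDiffAt_sphereInversion (k := 1) hx).differentiableAt one_ne_zero), euler,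
    ← Finset.sum_neg_distrib]
  simp only [euler_sphereInversion_apply hx]
  exact Finset.sum_congr rfl fun j _ => by ring

theorem lap_comp_sphereInversion {ψ : ℝ^n → ℝ} (hψ : ContDiffAt ℝ 2 ψ (sphereInversion x))
    (hx : x ≠ 0) :
    lap n (fun z => ψ (sphereInversion z)) x =
      lap n ψ (sphereInversion x) / ‖x‖ ^ 4 +
        (4 - 2 * n) * euler ψ (sphereInversion x) / ‖x‖ ^ 2 := by
  have hr : ‖x‖ ≠ 0 := norm_ne_zero_iff.2 hx
  rw [lap_comp hψ (contDiffAt_sphereInversion hx)]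
  simp only [sum_pderiv_sphereInversion_mul hx, lap_sphereInversion_apply hx]
  simp only [mul_div_assoc', mul_ite, mul_one, mul_zero, ite_div, zero_div, Finset.sum_ite_eq,
    Finset.mem_univ, if_true, lap_eq_sum_pderiv, euler, sphereInversion_apply, Finset.sum_div,
    Finset.mul_sum]
  congr 1
  exact Finset.sum_congr rfl fun j _ => by field_simp

end Inversion

section Kelvin

variable {n : ℕ} {x : ℝ^n}

def kelvinTransform (a : ℝ) (ψ : ℝ^n → ℝ) (x : ℝ^n) : ℝ := ‖x‖ ^ a * ψ (sphereInversion x)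

theorem kelvinTransform_norm_rpow_mul (hx : x ≠ 0) (a b : ℝ) (ψ : ℝ^n → ℝ) :
    kelvinTransform a (fun y => ‖y‖ ^ b * ψ y) x = kelvinTransform (a - b) ψ x := by
  have hr : 0 < ‖x‖ := norm_pos_iff.2 hx
  rw [kelvinTransform, kelvinTransform, norm_sphereInversion, Real.inv_rpow hr.le,
    ← Real.rpow_neg hr.le, ← mul_assoc, ← Real.rpow_add hr, sub_eq_add_neg]

theorem norm_rpow_mul_kelvinTransform (hx : x ≠ 0) (a b : ℝ) (ψ : ℝ^n → ℝ) :
    ‖x‖ ^ b * kelvinTransform a ψ x = kelvinTransform (b + a) ψ x := by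
  rw [kelvinTransform, kelvinTransform, ← mul_assoc, ← Real.rpow_add (norm_pos_iff.2 hx)]

theorem lap_kelvinTransform {ψ : ℝ^n → ℝ} (hψ : ContDiffAt ℝ 2 ψ (sphereInversion x))
    (hx : x ≠ 0) :
    lap n (kelvinTransform (2 - n) ψ) x = ‖x‖ ^ (-4 : ℝ) * kelvinTransform (2 - n) (lap n ψ) x := by
  have hr : ‖x‖ ≠ 0 := norm_ne_zero_iff.2 hx
  have hψσ : ContDiffAt ℝ 2 (fun z => ψ (sphereInversion z)) x :=
    hψ.comp x (contDiffAt_sphereInversion hx)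
  unfold kelvinTransform
  rw [lap_norm_rpow_mul hψσ hx, lap_comp_sphereInversion hψ hx,
    euler_comp_sphereInversion (hψ.differentiableAt two_ne_zero) hx,
    Real.rpow_sub_two hr, Real.rpow_neg_ofNat, zpow_neg, zpow_ofNat]
  field_simp
  ring

end Kelvin

theorem stmt_17_general (n : ℕ)
    (φ : EuclideanSpace ℝ (Fin n) → ℝ)
    (hφ : ContDiffOn ℝ 4 φ {(0 : EuclideanSpace ℝ (Fin n))}ᶜ)
    (φs : EuclideanSpace ℝ (Fin n) → ℝ)
    (hφs : ∀ x : EuclideanSpace ℝ (Fin n),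
      φs x = ‖x‖ ^ (-((n : ℝ) - 4)) * φ ((‖x‖ ^ 2)⁻¹ • x)) :
    ∀ x : EuclideanSpace ℝ (Fin n), x ≠ 0 →
      bilap n φs x = ‖x‖ ^ (-(n : ℝ) - 4) * bilap n φ ((‖x‖ ^ 2)⁻¹ • x) := by
  intro x hx
  set ψ : ℝ^n → ℝ := fun y => ‖y‖ ^ (-2 : ℝ) * φ y
  set h : ℝ^n → ℝ := fun y => ‖y‖ ^ (4 : ℝ) * lap n ψ y
  have hφ' (y : ℝ^n) (hy : y ≠ 0) : ContDiffAt ℝ 4 φ y :=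
    hφ.contDiffAt (isOpen_compl_singleton.mem_nhds hy)
  have hψ (y : ℝ^n) (hy : y ≠ 0) : ContDiffAt ℝ 4 ψ y :=
    (contDiffAt_norm_rpow hy _).mul (hφ' y hy)
  have hσx := sphereInversion_ne_zero hx
  have hφs_eq (z : ℝ^n) (hz : z ≠ 0) : φs z = kelvinTransform (2 - n) ψ z := by
    rw [hφs, kelvinTransform_norm_rpow_mul hz, kelvinTransform, sphereInversion]
    ring_nf
  have hlap_eq (z : ℝ^n) (hz : z ≠ 0) : lap n φs z = kelvinTransform (2 - n) h z := by
    rw [lap_congr_nhds ((eventually_ne_nhds hz).mono hφs_eq),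
      lap_kelvinTransform ((hψ _ (sphereInversion_ne_zero hz)).of_le (by norm_num)) hz,
      norm_rpow_mul_kelvinTransform hz, kelvinTransform_norm_rpow_mul hz]
    ring_nf
  have hh : ContDiffAt ℝ 2 h (sphereInversion x) :=
    (contDiffAt_norm_rpow hσx _).mul ((hψ _ hσx).lap (by norm_num))
  calc bilap n φs x = lap n (kelvinTransform (2 - n) h) x :=
        lap_congr_nhds ((eventually_ne_nhds hx).mono hlap_eq)
    _ = ‖x‖ ^ (-4 : ℝ) * kelvinTransform (2 - n) (fun y => ‖y‖ ^ (2 : ℝ) * bilap n φ y) x := by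
        rw [lap_kelvinTransform hh hx, kelvinTransform, kelvinTransform,
          lap_norm_rpow_four_mul_lap_norm_rpow_neg_two_mul (hφ' _ hσx) hσx]
    _ = ‖x‖ ^ (-(n : ℝ) - 4) * bilap n φ ((‖x‖ ^ 2)⁻¹ • x) := by
        rw [kelvinTransform_norm_rpow_mul hx, norm_rpow_mul_kelvinTransform hx, kelvinTransform,
          sphereInversion]
        ring_nf

theorem stmt_17 (n : ℕ) (hn : 5 ≤ n)
    (φ : EuclideanSpace ℝ (Fin n) → ℝ)
    (hφ : ContDiffOn ℝ 4 φ {(0 : EuclideanSpace ℝ (Fin n))}ᶜ)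
    (φs : EuclideanSpace ℝ (Fin n) → ℝ)
    (hφs : ∀ x : EuclideanSpace ℝ (Fin n),
      φs x = ‖x‖ ^ (-((n : ℝ) - 4)) * φ ((‖x‖ ^ 2)⁻¹ • x)) :
    ∀ x : EuclideanSpace ℝ (Fin n), x ≠ 0 →
      bilap n φs x = ‖x‖ ^ (-(n : ℝ) - 4) * bilap n φ ((‖x‖ ^ 2)⁻¹ • x) :=
  stmt_17_general n φ hφ φs hφs
end
end
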